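/- Fix a positive integer m. Every solution n > (L_{2m}² + L_{2m} − 3)³ of the equation σ₂(n) − n² = L_{2m}·n + (L_{2m}² − 3) is of the form n = L_{2k-1}·L_{2k+2m-1} where both L_{2k-1} and L_{2k+2m-1} are prime. -/
import Mathlib
set_option maxHeartbeats 1000000

def lucas : ℕ → ℕ
  | 0 => 2
  | 1 => 1
  | n + 2 => lucas (n + 1) + lucas n

lemma lucas_two_step (n : ℕ) : lucas (n+2) = lucas (n+1) + lucas n := rfl

lemma lucas_fib (a : ℕ) : 2 * lucas (a+1) = lucas a + 5 * Nat.fib a ∧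
    2 * Nat.fib (a+1) = lucas a + Nat.fib a := by
  induction a with
  | zero => simp [lucas]
  | succ a ih =>
    obtain ⟨h1, h2⟩ := ih
    rw [lucas_two_step, Nat.fib_add_two]
    omega

lemma lucas_add (b a : ℕ) : 2 * lucas (a + b) = lucas a * lucas b + 5 * (Nat.fib a * Nat.fib b) ∧
    2 * Nat.fib (a + b) = lucas a * Nat.fib b + Nat.fib a * lucas b := by
  induction b using Nat.strong_induction_on with
  | _ b ih =>
    match b with
    | 0 => constructor <;> simp [lucas] <;> ring
    | 1 =>
      have := lucas_fib a
      simp [lucas, Nat.fib_one]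
      omega
    | (b+2) =>
      obtain ⟨h1, h2⟩ := ih b (by omega)
      obtain ⟨h3, h4⟩ := ih (b+1) (by omega)
      constructor
      · rw [show a + (b+2) = (a+b)+2 by ring, lucas_two_step, lucas_two_step,
          show a + b + 1 = a + (b+1) by ring, Nat.fib_add_two]
        nlinarith [h1, h2, h3, h4]
      · rw [show a + (b+2) = (a+b)+2 by ring, Nat.fib_add_two, lucas_two_step,
          show a + b + 1 = a + (b+1) by ring, Nat.fib_add_two]
        nlinarith [h1, h2, h3, h4]

lemma lucas_norm (b : ℕ) : (lucas b : ℤ)^2 - 5 * (Nat.fib b : ℤ)^2 = 4 * (-1)^b := by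
  induction b with
  | zero => simp [lucas]
  | succ b ih =>
    obtain ⟨h1, h2⟩ := lucas_fib b
    have h1' : (2:ℤ) * lucas (b+1) = lucas b + 5 * Nat.fib b := by exact_mod_cast h1
    have h2' : (2:ℤ) * Nat.fib (b+1) = lucas b + Nat.fib b := by exact_mod_cast h2
    have key : (4:ℤ) * ((lucas (b+1):ℤ)^2 - 5 * (Nat.fib (b+1):ℤ)^2) = -4 * ((lucas b:ℤ)^2 - 5*(Nat.fib b:ℤ)^2) := by
      nlinarith [h1', h2']
    rw [ih] at key
    have : ((-1:ℤ))^(b+1) = -((-1)^b) := by ring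
    rw [this]
    linarith [key]

lemma lucas_sub (a b : ℕ) (h : b ≤ a) :
    (lucas a : ℤ) * lucas b - 5 * (Nat.fib a * Nat.fib b) = 2 * (-1)^b * lucas (a - b) := by
  obtain ⟨d, rfl⟩ : ∃ d, a = d + b := ⟨a - b, by omega⟩
  obtain ⟨h1, h2⟩ := lucas_add b d
  have h1' : (2:ℤ) * lucas (d+b) = lucas d * lucas b + 5 * (Nat.fib d * Nat.fib b) := by exact_mod_cast h1
  have h2' : (2:ℤ) * Nat.fib (d+b) = lucas d * Nat.fib b + Nat.fib d * lucas b := by exact_mod_cast h2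
  have hn := lucas_norm b
  have key : (2:ℤ) * ((lucas (d+b) : ℤ) * lucas b - 5 * (Nat.fib (d+b) * Nat.fib b)) =
      (lucas d : ℤ) * (4 * (-1)^b) := by
    calc (2:ℤ) * ((lucas (d+b) : ℤ) * lucas b - 5 * (Nat.fib (d+b) * Nat.fib b))
        = (2 * (lucas (d+b):ℤ)) * lucas b - 5 * (2 * (Nat.fib (d+b):ℤ)) * Nat.fib b := by ring
      _ = (lucas d : ℤ) * ((lucas b:ℤ)^2 - 5 * (Nat.fib b:ℤ)^2) := by rw [h1', h2']; ring
      _ = (lucas d : ℤ) * (4 * (-1)^b) := by rw [hn]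
  rw [show d + b - b = d by omega]
  linarith [key]

lemma lucas_pos (n : ℕ) : 0 < lucas n := by
  induction n using Nat.strong_induction_on with
  | _ n ih =>
    match n with
    | 0 => norm_num [lucas]
    | 1 => norm_num [lucas]
    | (n+2) =>
      have := ih n (by omega)
      rw [lucas_two_step]; omega

lemma lucas_mono {a b : ℕ} (ha : 1 ≤ a) (hab : a ≤ b) : lucas a ≤ lucas b := by
  induction b with
  | zero => omega
  | succ b ih =>
    rcases Nat.lt_or_ge a (b+1) with h | h
    · have hb : a ≤ b := by omega
      have step : lucas b ≤ lucas (b+1) := by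
        match b, (by omega : 1 ≤ b) with
        | (c+1), _ => rw [lucas_two_step]; have := lucas_pos c; omega
      exact le_trans (ih hb) step
    · have : a = b + 1 := by omega
      rw [this]

lemma pell_lucas : ∀ x : ℕ, ∀ y : ℕ, 1 ≤ x → x^2 + 4 = 5 * y^2 →
    ∃ j, 1 ≤ j ∧ x = lucas (2*j-1) ∧ y = Nat.fib (2*j-1) := by
  intro x
  induction x using Nat.strong_induction_on with
  | _ x ih =>
    intro y hx h
    rcases Nat.lt_or_ge x 5 with hx5 | hx5
    · interval_cases x
      · have hy : y = 1 := by rcases Nat.lt_or_ge y 2 with h' | h' <;> nlinarith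
        exact ⟨1, by omega, by norm_num [lucas], by rw [hy]; decide⟩
      · exfalso; rcases Nat.lt_or_ge y 2 with h' | h' <;> nlinarith
      · exfalso; rcases Nat.lt_or_ge y 2 with h' | h' <;> nlinarith
      · refine ⟨2, by omega, by decide, ?_⟩
        have hy : y = 2 := by rcases Nat.lt_or_ge y 3 with h' | h' <;> [skip; nlinarith]; rcases Nat.lt_or_ge y 2 with h'' | h'' <;> nlinarith
        rw [hy]; decide
    · have hy3 : 3 ≤ y := by nlinarith
      have hpar : x % 2 = y % 2 := by
        have h2 : Even (x^2+4) ↔ Even (5*y^2) := by rw [h]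
        rw [Nat.even_add, Nat.even_mul, Nat.even_pow, Nat.even_pow] at h2
        simp [(by decide : Even 4), (by decide : ¬ Even 5), Nat.even_iff] at h2
        omega
      have h5 : 5*y < 3*x := by nlinarith
      have h6 : x < 3*y := by nlinarith
      obtain ⟨a, ha⟩ : ∃ a, 3*x = 5*y + 2*a := ⟨(3*x-5*y)/2, by omega⟩
      obtain ⟨b, hb⟩ : ∃ b, 3*y = x + 2*b := ⟨(3*y-x)/2, by omega⟩
      have ha1 : 1 ≤ a := by omega
      have hax : a < x := by nlinarith
      have hab : a^2 + 4 = 5*b^2 := by nlinarith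
      obtain ⟨j, hj1, hja, hjb⟩ := ih a hax b ha1 hab
      refine ⟨j+1, by omega, ?_, ?_⟩
      · have e : 2*(j+1)-1 = (2*j-1)+2 := by omega
        rw [e, lucas_two_step]
        obtain ⟨g1, g2⟩ := lucas_fib (2*j-1)
        have g3 := lucas_fib (2*j-1+1)
        rw [show 2*j-1+1+1 = 2*j-1+2 from rfl, lucas_two_step] at g3
        have h2x : 2*x = 3*a + 5*b := by omega
        rw [hja, hjb] at h2x
        omega
      · have e : 2*(j+1)-1 = (2*j-1)+2 := by omega
        rw [e, Nat.fib_add_two]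
        obtain ⟨g1, g2⟩ := lucas_fib (2*j-1)
        have g3 := lucas_fib (2*j-1+1)
        rw [show 2*j-1+1+1 = 2*j-1+2 from rfl, Nat.fib_add_two] at g3
        have h2y : 2*y = a + 3*b := by omega
        rw [hja, hjb] at h2y
        omega

lemma sigma2_prime {p : ℕ} (hp : p.Prime) : ArithmeticFunction.sigma 2 p = 1 + p^2 := by
  rw [ArithmeticFunction.sigma_apply, hp.divisors]
  rw [Finset.sum_insert (by simp [hp.one_lt.ne]), Finset.sum_singleton]
  ring

theorem stmt15 (m : ℕ) (hm : 0 < m) (n : ℕ)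
    (hn : (n : ℤ) > ((lucas (2 * m) : ℤ) ^ 2 + (lucas (2 * m) : ℤ) - 3) ^ 3)
    (heq : (ArithmeticFunction.sigma 2 n : ℤ) - (n : ℤ) ^ 2 =
      (lucas (2 * m) : ℤ) * n + ((lucas (2 * m) : ℤ) ^ 2 - 3)) :
    ∃ k : ℕ, 1 ≤ k ∧ n = lucas (2 * k - 1) * lucas (2 * k + 2 * m - 1) ∧
      (lucas (2 * k - 1)).Prime ∧ (lucas (2 * k + 2 * m - 1)).Prime := by
  have hc3 : 3 ≤ lucas (2*m) := by
    have h1 : lucas 2 ≤ lucas (2*m) := lucas_mono (by omega) (by omega)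
    have : lucas 2 = 3 := by decide
    omega
  set C : ℤ := (lucas (2*m) : ℤ) with hC
  have hC3 : (3:ℤ) ≤ C := by rw [hC]; exact_mod_cast hc3
  have hcube : C^6 ≤ (C^2 + C - 3)^3 := by
    have h1 : C^2 ≤ C^2 + C - 3 := by linarith
    calc C^6 = (C^2)^3 := by ring
      _ ≤ (C^2 + C - 3)^3 := pow_le_pow_left₀ (by positivity) h1 3
  have hn6 : C^6 < (n:ℤ) := lt_of_le_of_lt hcube hn
  have hn730 : 730 ≤ n := by
    have h36 : (3:ℤ)^6 ≤ C^6 := pow_le_pow_left₀ (by norm_num) hC3 6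
    have h729 : (729:ℤ) < (n:ℤ) := by nlinarith [h36, hn6]
    have : 729 < n := by exact_mod_cast h729
    omega
  -- n is not prime
  have hnp : ¬ n.Prime := by
    intro hpn
    rw [show ((ArithmeticFunction.sigma 2 n : ℕ) : ℤ) = ((1 + n^2 : ℕ) : ℤ) by rw [sigma2_prime hpn]] at heq
    push_cast at heq
    have : (730:ℤ) ≤ n := by exact_mod_cast hn730
    nlinarith
  set p := n.minFac with hpdef
  have hp : p.Prime := Nat.minFac_prime (by omega)
  set t := n / p with htdef
  have hpt : n = p * t := (Nat.mul_div_cancel' n.minFac_dvd).symm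
  have hp2 : 2 ≤ p := hp.two_le
  have ht2 : 2 ≤ t := by
    rcases Nat.lt_or_ge t 2 with h | h
    · interval_cases t
      · omega
      · exact absurd (by rw [hpt]; simpa using hp) hnp
    · exact h
  have htn : t < n := by
    rw [hpt]; nlinarith
  have ht_dvd : t ∣ n := ⟨p, by rw [hpt]; ring⟩
  -- lower bound on sigma
  have hlb : 1 + t^2 + n^2 ≤ ArithmeticFunction.sigma 2 n := by
    rw [ArithmeticFunction.sigma_apply]
    have hsub : ({1, t, n} : Finset ℕ) ⊆ n.divisors := by
      intro d hd
      simp only [Finset.mem_insert, Finset.mem_singleton] at hd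
      rcases hd with rfl | rfl | rfl
      · exact Nat.one_mem_divisors.mpr (by omega)
      · exact Nat.mem_divisors.mpr ⟨ht_dvd, by omega⟩
      · exact Nat.mem_divisors.mpr ⟨dvd_rfl, by omega⟩
    have hsum : ∑ d ∈ ({1, t, n} : Finset ℕ), d^2 = 1 + t^2 + n^2 := by
      rw [Finset.sum_insert (by simp; omega), Finset.sum_insert (by simp; omega),
        Finset.sum_singleton]
      ring
    calc 1 + t^2 + n^2 = ∑ d ∈ ({1, t, n} : Finset ℕ), d^2 := hsum.symm
      _ ≤ ∑ d ∈ n.divisors, d^2 := Finset.sum_le_sum_of_subset hsub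
  -- t < (c+1) * p
  have hkey : (t:ℤ)^2 ≤ C * n + C^2 - 4 := by
    have : ((1 + t^2 + n^2 : ℕ) : ℤ) ≤ (ArithmeticFunction.sigma 2 n : ℤ) := by exact_mod_cast hlb
    push_cast at this
    linarith [heq, this]
  clear hlb
  have hc2n : C^2 - 4 < (n:ℤ) := by nlinarith
  have ht_lt : (t:ℤ) < (C+1) * p := by
    by_contra hcon
    push_neg at hcon
    have htpos : (0:ℤ) < t := by exact_mod_cast (by omega : 0 < t)
    have hn' : ((n:ℕ):ℤ) = (p:ℤ) * t := by exact_mod_cast hpt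
    nlinarith
  -- t is prime
  have htprime : t.Prime := by
    by_contra hcomp
    have hq : t.minFac.Prime := Nat.minFac_prime (by omega)
    have hq2 : t.minFac^2 ≤ t := Nat.minFac_sq_le_self (by omega) hcomp
    have hpq : p ≤ t.minFac := Nat.minFac_le_of_dvd hq.two_le (dvd_trans t.minFac_dvd ht_dvd)
    have hPt : (p:ℤ)^2 ≤ (t:ℤ) := by
      have : p^2 ≤ t := le_trans (Nat.pow_le_pow_left hpq 2) hq2
      exact_mod_cast this
    have hPC : (p:ℤ) ≤ C := by nlinarith
    have hn' : ((n:ℕ):ℤ) = (p:ℤ) * t := by exact_mod_cast hpt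
    have hP2 : (2:ℤ) ≤ p := by exact_mod_cast hp2
    have h1 : (t:ℤ) < (C+1)*C := lt_of_lt_of_le ht_lt (by nlinarith)
    have h2 : (n:ℤ) ≤ C*((C+1)*C) := by
      rw [hn']
      exact mul_le_mul hPC (le_of_lt h1) (by positivity) (by linarith)
    have hC2 : (9:ℤ) ≤ C^2 := by nlinarith
    have hC4 : (81:ℤ) ≤ C^4 := by nlinarith
    nlinarith [hn6, h2, hC2, hC4, hC3]
  -- p ≤ t
  have hple : p ≤ t := Nat.minFac_le_of_dvd htprime.two_le ht_dvd
  rcases eq_or_lt_of_le hple with heqpt | hplt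
  · -- n = p^2 : contradiction
    exfalso
    have hnpp : n = p^2 := by rw [hpt, ← heqpt]; ring
    have hσ : ArithmeticFunction.sigma 2 n = 1 + p^2 + p^4 := by
      rw [hnpp, ArithmeticFunction.sigma_apply, Nat.divisors_prime_pow hp, Finset.sum_map]
      simp [Finset.sum_range_succ]
      ring
    rw [show ((ArithmeticFunction.sigma 2 n : ℕ) : ℤ) = ((1 + p^2 + p^4 : ℕ):ℤ) by rw [hσ]] at heq
    push_cast at heq
    have hnpp' : (n:ℤ) = (p:ℤ)^2 := by exact_mod_cast hnpp
    have hP2 : (2:ℤ) ≤ p := by exact_mod_cast hp2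
    nlinarith [heq, hnpp', hC3, hP2]
  · -- n = p * t, p < t both prime
    have hco : Nat.Coprime p t := (Nat.coprime_primes hp htprime).mpr (by omega)
    have hσ : ArithmeticFunction.sigma 2 n = (1 + p^2) * (1 + t^2) := by
      rw [hpt, ArithmeticFunction.isMultiplicative_sigma.map_mul_of_coprime hco,
        sigma2_prime hp, sigma2_prime htprime]
    rw [show ((ArithmeticFunction.sigma 2 n : ℕ) : ℤ) = (((1 + p^2) * (1 + t^2) : ℕ):ℤ) by rw [hσ]] at heq
    push_cast at heq
    clear hσ
    have hn' : (n:ℤ) = (p:ℤ) * t := by exact_mod_cast hpt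
    set P : ℤ := (p:ℤ) with hPdef
    set Q : ℤ := (t:ℤ) with hQdef
    have heq2 : P^2 + Q^2 + 1 = C*P*Q + C^2 - 3 := by
      rw [hn'] at heq
      nlinarith [heq]
    set F : ℤ := (Nat.fib (2*m) : ℤ) with hFdef
    have hF1 : (1:ℤ) ≤ F := by
      have h0 : 0 < Nat.fib (2*m) := Nat.fib_pos.mpr (by omega)
      rw [hFdef]
      exact_mod_cast h0
    have hnorm : C^2 - 4 = 5 * F^2 := by
      have := lucas_norm (2*m)
      rw [show ((-1:ℤ))^(2*m) = 1 by rw [pow_mul]; norm_num] at this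
      linarith
    have hW : (2*Q - C*P)^2 = 5*F^2*(P^2+4) := by nlinarith [heq2, hnorm]
    have hFd : F ∣ (2*Q - C*P) := by
      refine (Int.pow_dvd_pow_iff two_ne_zero).mp ⟨5*(P^2+4), ?_⟩
      rw [hW]; ring
    obtain ⟨V, hV⟩ := hFd
    have hF0 : F ≠ 0 := by linarith
    have hV2 : V^2 = 5*(P^2+4) := by
      have h1 : F^2 * V^2 = F^2 * (5*(P^2+4)) := by
        rw [show F^2*V^2 = (F*V)^2 from by ring, ← hV, hW]; ring
      exact mul_left_cancel₀ (pow_ne_zero 2 hF0) h1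
    have h5V : (5:ℤ) ∣ V := by
      have hd : ((5:ℕ):ℤ) ∣ V^2 := ⟨P^2+4, by push_cast; linarith⟩
      have := Int.Prime.dvd_pow' (by norm_num : Nat.Prime 5) hd
      exact_mod_cast this
    obtain ⟨U, rfl⟩ := h5V
    have hU2 : P^2 + 4 = 5*U^2 := by
      have h5 : (5:ℤ)*(P^2+4) = 5*(5*U^2) := by linear_combination -hV2
      linarith
    have hUabs : P^2 + 4 = 5*((U.natAbs:ℤ))^2 := by
      rw [hU2]
      congr 1
      rw [← Int.abs_eq_natAbs, sq_abs]
    have hpell : p^2 + 4 = 5 * (U.natAbs)^2 := by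
      rw [hPdef] at hUabs
      exact_mod_cast hUabs
    obtain ⟨j, hj1, hjp, hju⟩ := pell_lucas p U.natAbs (by omega) hpell
    set u := Nat.fib (2*j-1) with hudef
    have hUcase : U = (u:ℤ) ∨ U = -(u:ℤ) := by
      rcases Int.natAbs_eq U with h | h
      · left; rw [h, hju]
      · right; rw [h, hju]
    -- addition formula casted
    have hadd : 2 * (lucas ((2*j-1) + 2*m) : ℤ) =
        (lucas (2*j-1) : ℤ) * lucas (2*m) + 5 * ((Nat.fib (2*j-1) : ℤ) * Nat.fib (2*m)) := by
      exact_mod_cast (lucas_add (2*m) (2*j-1)).1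
    have hPluc : P = (lucas (2*j-1) : ℤ) := by rw [hPdef]; exact_mod_cast hjp
    rcases hUcase with hUp | hUm
    · -- plus case
      have h2Q : 2*Q = (lucas (2*j-1) : ℤ) * lucas (2*m) + 5 * ((Nat.fib (2*j-1) : ℤ) * Nat.fib (2*m)) := by
        have h := hV
        rw [hUp] at h
        rw [hC, hPluc, hFdef, hudef] at h
        linarith [h]
      have hQval : Q = (lucas ((2*j-1) + 2*m) : ℤ) := by linarith [hadd, h2Q]
      have htval : t = lucas (2*j + 2*m - 1) := by
        have e : (2*j-1) + 2*m = 2*j + 2*m - 1 := by omega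
        rw [e] at hQval
        rw [hQdef] at hQval
        exact_mod_cast hQval
      refine ⟨j, hj1, ?_, ?_, ?_⟩
      · rw [hpt, ← hjp, ← htval]
      · rw [← hjp]; exact hp
      · rw [← htval]; exact htprime
    · -- minus case
      exfalso
      have h2Q : 2*Q = (lucas (2*j-1) : ℤ) * lucas (2*m) - 5 * ((Nat.fib (2*j-1) : ℤ) * Nat.fib (2*m)) := by
        have h := hV
        rw [hUm] at h
        rw [hC, hPluc, hFdef, hudef] at h
        linarith [h]
      have hQpos : (0:ℤ) < Q := by rw [hQdef]; exact_mod_cast (by omega : 0 < t)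
      rcases Nat.lt_or_ge (2*j-1) (2*m) with hlt | hge
      · have hsub := lucas_sub (2*m) (2*j-1) (by omega)
        rw [show ((-1:ℤ))^(2*j-1) = -1 from Odd.neg_one_pow ⟨j-1, by omega⟩] at hsub
        have hlpos : (0:ℤ) < (lucas (2*m - (2*j-1)) : ℤ) := by exact_mod_cast lucas_pos _
        linarith [h2Q, hsub, hlpos, hQpos]
      · have hsub := lucas_sub (2*j-1) (2*m) hge
        rw [show ((-1:ℤ))^(2*m) = 1 from by rw [pow_mul]; norm_num] at hsub
        have hQval : Q = (lucas ((2*j-1) - 2*m) : ℤ) := by linarith [h2Q, hsub]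
        have hmono : lucas ((2*j-1) - 2*m) ≤ lucas (2*j-1) := lucas_mono (by omega) (by omega)
        have hmono' : ((lucas ((2*j-1) - 2*m) : ℕ) : ℤ) ≤ ((lucas (2*j-1) : ℕ) : ℤ) := by exact_mod_cast hmono
        have hPQ : P < Q := by rw [hPdef, hQdef]; exact_mod_cast hplt
        rw [hPluc] at hPQ
        linarith [hQval, hmono', hPQ]
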